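/- arXiv:2601.00560 — 3 statements merged into one kernel-verified Lean document; each statement's English description precedes it below -/
import Mathlib

section
/- Let ω, ω̄ : V → ℚ be two weight functions on a finite vertex set such that for every vector b ∈ {-1,0,1}^V with at most c nonzero entries, the sign of the inner product of ω with b equals the sign of the inner product of ω̄ with b. Then for all finite sets S, S' ⊆ V with |S ⊕ S'| ≤ c, we have ω(S') > ω(S) if and only if ω̄(S') > ω̄(S). In other words, the transition graphs of the c-swap local search under ω and under ω̄ coincide. -/
theorem stmt_1 {V : Type*} [Fintype V] [DecidableEq V]
    (ω ωbar : V → ℚ) (c : ℕ)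
    (hsign : ∀ b : V → ℚ,
      (∀ v, b v = -1 ∨ b v = 0 ∨ b v = 1) →
      (Finset.univ.filter (fun v => b v ≠ 0)).card ≤ c →
      SignType.sign (∑ v, ω v * b v) = SignType.sign (∑ v, ωbar v * b v)) :
    ∀ S S' : Finset V, (symmDiff S S').card ≤ c →
      ((∑ v ∈ S', ω v) > (∑ v ∈ S, ω v) ↔
        (∑ v ∈ S', ωbar v) > (∑ v ∈ S, ωbar v)) := by
  intro S S' hc
  set b : V → ℚ := fun v => (if v ∈ S' then (1:ℚ) else 0) - (if v ∈ S then 1 else 0) with hbdef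
  have hb : ∀ v, b v = -1 ∨ b v = 0 ∨ b v = 1 := by
    intro v
    by_cases h1 : v ∈ S' <;> by_cases h2 : v ∈ S <;> simp [hbdef, h1, h2]
  have hcard : (Finset.univ.filter (fun v => b v ≠ 0)).card ≤ c := by
    refine le_trans (Finset.card_le_card ?_) hc
    intro v hv
    simp only [Finset.mem_filter, hbdef] at hv
    rw [Finset.mem_symmDiff]
    by_cases h1 : v ∈ S' <;> by_cases h2 : v ∈ S <;> simp [h1, h2] at hv ⊢
  have hsum : ∀ f : V → ℚ, ∑ v, f v * b v = ∑ v ∈ S', f v - ∑ v ∈ S, f v := by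
    intro f
    simp only [hbdef, mul_sub, mul_ite, mul_one, mul_zero]
    rw [Finset.sum_sub_distrib]
    congr 1 <;> simp [Finset.sum_ite_mem]
  have key := hsign b hb hcard
  rw [hsum ω, hsum ωbar] at key
  constructor <;> intro h
  · have h1 : SignType.sign (∑ v ∈ S', ω v - ∑ v ∈ S, ω v) = 1 :=
      sign_pos (sub_pos.mpr h)
    rw [h1] at key
    exact sub_pos.mp ((sign_eq_one_iff).mp key.symm)
  · have h1 : SignType.sign (∑ v ∈ S', ωbar v - ∑ v ∈ S, ωbar v) = 1 :=
      sign_pos (sub_pos.mpr h)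
    rw [h1] at key
    exact sub_pos.mp ((sign_eq_one_iff).mp key)
end

section
/- Suppose all vertices of a graph on n vertices have pairwise distinct positive weights, and label the vertices v₁, …, vₙ in increasing order of weight. Define the potential of a vertex subset R as p(R) = Σ_{vᵢ ∈ R} i. Then every improving 2-swap strictly increases the potential: if |R ⊕ R'| ≤ 2 and ω(R') > ω(R), then p(R') > p(R). -/
theorem stmt_2 {n : ℕ} (ω : Fin n → ℚ)
    (hpos : ∀ i, 0 < ω i) (hmono : StrictMono ω)
    (R R' : Finset (Fin n))
    (hswap : (symmDiff R R').card ≤ 2)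
    (himpr : (∑ i ∈ R', ω i) > (∑ i ∈ R, ω i)) :
    (∑ i ∈ R', ((i : ℕ) + 1)) > (∑ i ∈ R, ((i : ℕ) + 1)) := by
  classical
  set A := R' \ R with hA
  set B := R \ R' with hB
  have hdisj : Disjoint B A := disjoint_sdiff_sdiff
  have hcard : B.card + A.card ≤ 2 := by
    have h1 : symmDiff R R' = B ∪ A := by
      simp [symmDiff_def, hA, hB, Finset.sup_eq_union]
    rwa [h1, Finset.card_union_of_disjoint hdisj] at hswap
  have split : ∀ (M : Type) [AddCommMonoid M], ∀ f : Fin n → M,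
      (∑ i ∈ R', f i) = (∑ i ∈ R ∩ R', f i) + (∑ i ∈ A, f i) ∧
      (∑ i ∈ R, f i) = (∑ i ∈ R ∩ R', f i) + (∑ i ∈ B, f i) := by
    intro M _ f
    constructor
    · rw [Finset.inter_comm]
      exact (Finset.sum_inter_add_sum_sdiff R' R f).symm
    · exact (Finset.sum_inter_add_sum_sdiff R R' f).symm
  obtain ⟨e1, e2⟩ := split ℚ ω
  have hAB : (∑ i ∈ B, ω i) < (∑ i ∈ A, ω i) := by
    rw [e1, e2] at himpr; linarith
  obtain ⟨f1, f2⟩ := split ℕ (fun i => (i : ℕ) + 1)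
  rw [f1, f2]
  have key : (∑ i ∈ B, ((i : ℕ) + 1)) < (∑ i ∈ A, ((i : ℕ) + 1)) := by
    rcases Finset.eq_empty_or_nonempty A with hAe | ⟨a, ha⟩
    · exfalso
      have : (0:ℚ) ≤ ∑ i ∈ B, ω i := Finset.sum_nonneg fun i _ => (hpos i).le
      rw [hAe] at hAB; simp at hAB; linarith
    · rcases Finset.eq_empty_or_nonempty B with hBe | ⟨b, hb⟩
      · rw [hBe]; simp
        exact Finset.sum_pos (fun i _ => Nat.succ_pos _) ⟨a, ha⟩
      · -- both nonempty, so cards are 1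
        have hA1 : A.card = 1 := by
          have := Finset.card_pos.mpr ⟨a, ha⟩
          have := Finset.card_pos.mpr ⟨b, hb⟩
          omega
        have hB1 : B.card = 1 := by
          have := Finset.card_pos.mpr ⟨a, ha⟩
          have := Finset.card_pos.mpr ⟨b, hb⟩
          omega
        obtain ⟨a', hAa⟩ := Finset.card_eq_one.mp hA1
        obtain ⟨b', hBb⟩ := Finset.card_eq_one.mp hB1
        rw [hAa, hBb] at hAB ⊢
        simp only [Finset.sum_singleton] at hAB ⊢
        have : b' < a' := by
          by_contra h
          push_neg at h
          exact absurd (hmono.le_iff_le.mpr h) (not_le.mpr hAB)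
        have : (b' : ℕ) < (a' : ℕ) := this
        omega
  omega
end

section
/- Under the hypotheses of the previous statement (pairwise distinct positive weights on n vertices), every improving sequence of 2-swaps R₀, R₁, …, R_r (i.e., each consecutive pair differs by a 2-swap and weights strictly increase along the sequence) has length r at most n(n+1)/2. -/
open Finset

theorem stmt_3 {n : ℕ} (ω : Fin n → ℚ)
    (hpos : ∀ i, 0 < ω i) (hmono : StrictMono ω)
    (r : ℕ) (R : Fin (r + 1) → Finset (Fin n))
    (hswap : ∀ i : Fin r, (symmDiff (R i.castSucc) (R i.succ)).card ≤ 2)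
    (himpr : ∀ i : Fin r, (∑ j ∈ R i.succ, ω j) > (∑ j ∈ R i.castSucc, ω j)) :
    r ≤ n * (n + 1) / 2 := by
  set p : Finset (Fin n) → ℕ := fun S => ∑ j ∈ S, (j.1 + 1) with hp
  -- each step strictly increases the potential
  have key : ∀ i : Fin r, p (R i.castSucc) < p (R i.succ) := by
    intro i
    set A := R i.castSucc with hA
    set B := R i.succ with hB
    have hdisj : Disjoint (A \ B) (B \ A) := disjoint_sdiff_sdiff
    have hcard : (A \ B).card + (B \ A).card ≤ 2 := by
      have h := hswap i
      rw [symmDiff_def] at h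
      rwa [Finset.sup_eq_union, card_union_of_disjoint hdisj] at h
    have e1 : ∑ j ∈ A ∩ B, ω j + ∑ j ∈ A \ B, ω j = ∑ j ∈ A, ω j :=
      Finset.sum_inter_add_sum_sdiff A B ω
    have e2 : ∑ j ∈ A ∩ B, ω j + ∑ j ∈ B \ A, ω j = ∑ j ∈ B, ω j := by
      rw [Finset.inter_comm]; exact Finset.sum_inter_add_sum_sdiff B A ω
    have hsum' : ∑ j ∈ A \ B, ω j < ∑ j ∈ B \ A, ω j := by
      have := himpr i; rw [← hA, ← hB] at this; linarith
    have p1 : ∑ j ∈ A ∩ B, (j.1 + 1) + ∑ j ∈ A \ B, (j.1 + 1) = p A :=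
      Finset.sum_inter_add_sum_sdiff A B _
    have p2 : ∑ j ∈ A ∩ B, (j.1 + 1) + ∑ j ∈ B \ A, (j.1 + 1) = p B := by
      rw [Finset.inter_comm]; exact Finset.sum_inter_add_sum_sdiff B A _
    have goal' : ∑ j ∈ A \ B, (j.1 + 1) < ∑ j ∈ B \ A, (j.1 + 1) := by
      rcases Nat.eq_zero_or_pos (B \ A).card with h0 | hposB
      · exfalso
        rw [card_eq_zero] at h0
        rw [h0, Finset.sum_empty] at hsum'
        have : (0:ℚ) ≤ ∑ j ∈ A \ B, ω j :=
          Finset.sum_nonneg fun j _ => le_of_lt (hpos j)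
        linarith
      rcases Nat.eq_zero_or_pos (A \ B).card with h1 | hposA
      · rw [card_eq_zero] at h1
        rw [h1, Finset.sum_empty]
        exact Finset.sum_pos (fun j _ => Nat.succ_pos _) (card_pos.mp hposB)
      · have hA1 : (A \ B).card = 1 := by omega
        have hB1 : (B \ A).card = 1 := by omega
        obtain ⟨a, ha⟩ := card_eq_one.mp hA1
        obtain ⟨b, hb⟩ := card_eq_one.mp hB1
        rw [ha, hb] at hsum' ⊢
        simp only [Finset.sum_singleton] at hsum' ⊢
        have hab : a < b := hmono.lt_iff_lt.mp hsum'
        have : a.1 < b.1 := hab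
        omega
    omega
  -- the map k ↦ p (R k) is strictly monotone
  have hsm : StrictMono (fun k : Fin (r + 1) => p (R k)) :=
    Fin.strictMono_iff_lt_succ.mpr key
  -- potential is bounded
  have hNval : p (Finset.univ : Finset (Fin n)) = n * (n + 1) / 2 := by
    have h1 : p (Finset.univ : Finset (Fin n)) = ∑ i ∈ Finset.range n, (i + 1) := by
      simpa [hp] using Fin.sum_univ_eq_sum_range (fun i => i + 1) n
    have h2 : ∑ i ∈ Finset.range (n + 1), i = ∑ i ∈ Finset.range n, (i + 1) + 0 :=
      Finset.sum_range_succ' id n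
    have h3 : ∑ i ∈ Finset.range (n + 1), i = (n + 1) * n / 2 := by
      rw [Finset.sum_range_id]; simp
    rw [h1, Nat.mul_comm]
    omega
  have hbound : ∀ S : Finset (Fin n), p S ≤ n * (n + 1) / 2 := by
    intro S
    rw [← hNval]
    exact Finset.sum_le_sum_of_subset (Finset.subset_univ S)
  -- count: r+1 distinct values in [0, N]
  have hcount : r + 1 ≤ n * (n + 1) / 2 + 1 := by
    have := Finset.card_le_card_of_injOn (s := (Finset.univ : Finset (Fin (r + 1))))
      (t := Finset.range (n * (n + 1) / 2 + 1)) (fun k => p (R k))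
      (fun k _ => Finset.mem_range.mpr (Nat.lt_succ_of_le (hbound (R k))))
      (fun x _ y _ h => hsm.injective h)
    simpa using this
  omega
end
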